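/- arXiv:2405.18446 — 3 statements merged into one kernel-verified Lean document; each statement's English description precedes it below -/
import Mathlib

section
/- Let M be a maximum matching in a simple graph G covering vertex set S, and let (u,v) be an edge of M. For a vertex w covered by M, let d_out(w) denote the number of neighbors of w outside S. Then either d_out(u) = d_out(v) = 1, or at least one of d_out(u), d_out(v) equals zero. -/
open SimpleGraph Set

/-- Augmenting: if `(u,v)` is a matching edge and `u`, `v` have distinct neighbors
outside the matched vertex set, we can build a strictly larger matching. -/
lemma aug_matching {V : Type*} [Fintype V] (G : SimpleGraph V)
    (M : G.Subgraph) (hM : M.IsMatching) {u v x y : V}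
    (huv : M.Adj u v) (hx : G.Adj u x) (hy : G.Adj v y)
    (hxM : x ∉ M.verts) (hyM : y ∉ M.verts) (hxy : x ≠ y) :
    ∃ M' : G.Subgraph, M'.IsMatching ∧ M'.edgeSet.ncard = M.edgeSet.ncard + 1 := by
  classical
  have huM : u ∈ M.verts := M.edge_vert huv
  have hvM : v ∈ M.verts := M.edge_vert huv.symm
  have hune : u ≠ v := huv.ne
  have hux : u ≠ x := fun h => hxM (h ▸ huM)
  have huy : u ≠ y := fun h => hyM (h ▸ huM)
  have hvx : v ≠ x := fun h => hxM (h ▸ hvM)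
  have hvy : v ≠ y := fun h => hyM (h ▸ hvM)
  have hpu : ∀ w, M.Adj u w → w = v := fun w hw => (hM huM).unique hw huv
  have hpv : ∀ w, M.Adj v w → w = u := fun w hw => (hM hvM).unique hw huv.symm
  set D : G.Subgraph := M.deleteVerts {u, v} with hD
  have hDadj : ∀ a b, D.Adj a b ↔ M.Adj a b ∧ a ∉ ({u,v} : Set V) ∧ b ∉ ({u,v} : Set V) := by
    intro a b
    rw [hD, Subgraph.deleteVerts_adj]
    constructor
    · rintro ⟨_, ha, _, hb, hab⟩
      exact ⟨hab, ha, hb⟩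
    · rintro ⟨hab, ha, hb⟩
      exact ⟨M.edge_vert hab, ha, M.edge_vert hab.symm, hb, hab⟩
  have hDm : D.IsMatching := by
    rintro w hw
    rw [hD, Subgraph.deleteVerts_verts] at hw
    obtain ⟨z, hz, hzu⟩ := hM hw.1
    have hwz : w ∉ ({u,v} : Set V) := hw.2
    have hzne : z ∉ ({u,v} : Set V) := by
      intro hmem
      rcases hmem with h | h
      · subst h
        exact hwz (by simp [hpu w hz.symm])
      · simp only [Set.mem_singleton_iff] at h
        subst h
        exact hwz (by simp [hpv w hz.symm])
    refine ⟨z, (hDadj w z).2 ⟨hz, hwz, hzne⟩, fun z' hz' => hzu z' ((hDadj w z').1 hz').1⟩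
  have hDedge : D.edgeSet = M.edgeSet \ {s(u,v)} := by
    ext e
    induction e using Sym2.ind with
    | _ a b =>
      simp only [Subgraph.mem_edgeSet, Set.mem_diff, Set.mem_singleton_iff]
      rw [hDadj]
      constructor
      · rintro ⟨hab, ha, hb⟩
        refine ⟨hab, fun h => ?_⟩
        rw [Sym2.eq_iff] at h
        rcases h with ⟨rfl, rfl⟩ | ⟨rfl, rfl⟩
        · exact ha (by simp)
        · exact hb (by simp)
      · rintro ⟨hab, hne⟩
        refine ⟨hab, ?_, ?_⟩
        · rintro (rfl | h)
          · exact hne (by rw [hpu b hab])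
          · simp only [Set.mem_singleton_iff] at h
            subst h
            exact hne (by rw [hpv b hab, Sym2.eq_swap])
        · rintro (rfl | h)
          · exact hne (by rw [hpu a hab.symm, Sym2.eq_swap])
          · simp only [Set.mem_singleton_iff] at h
            subst h
            exact hne (by rw [hpv a hab.symm])
  set M' : G.Subgraph := D ⊔ (G.subgraphOfAdj hx ⊔ G.subgraphOfAdj hy) with hM'
  have hDsupp : D.support ⊆ M.verts \ {u, v} := by
    intro a ha
    obtain ⟨b, hb⟩ := (Subgraph.mem_support _).1 ha
    rw [hDadj] at hb
    exact ⟨M.edge_vert hb.1, hb.2.1⟩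
  have hsupsub : ∀ (A B : G.Subgraph), (A ⊔ B).support ⊆ A.support ∪ B.support := by
    intro A B a ha
    obtain ⟨c, hc⟩ := (Subgraph.mem_support _).1 ha
    rcases hc with h | h
    · exact Or.inl ((Subgraph.mem_support _).2 ⟨c, h⟩)
    · exact Or.inr ((Subgraph.mem_support _).2 ⟨c, h⟩)
  have hm' : M'.IsMatching := by
    refine (hDm.sup ((Subgraph.IsMatching.subgraphOfAdj hx).sup
      (Subgraph.IsMatching.subgraphOfAdj hy) ?_)) ?_
    · rw [support_subgraphOfAdj, support_subgraphOfAdj]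
      refine Set.disjoint_left.2 ?_
      rintro a ha hb
      rcases ha with rfl | ha
      · rcases hb with h | h
        · exact hune h
        · exact huy (Set.mem_singleton_iff.1 h)
      · rw [Set.mem_singleton_iff] at ha
        subst ha
        rcases hb with h | h
        · exact hvx h.symm
        · exact hxy (Set.mem_singleton_iff.1 h)
    · refine Set.disjoint_left.2 fun a ha hb => ?_
      have ha' := hDsupp ha
      have hb' := hsupsub _ _ hb
      rw [support_subgraphOfAdj, support_subgraphOfAdj] at hb'
      rcases hb' with (rfl | h) | (rfl | h)
      · exact ha'.2 (by simp)
      · rw [Set.mem_singleton_iff] at h; subst h; exact hxM ha'.1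
      · exact ha'.2 (by simp)
      · rw [Set.mem_singleton_iff] at h; subst h; exact hyM ha'.1
  have hedge : M'.edgeSet = (M.edgeSet \ {s(u,v)}) ∪ {s(u,x)} ∪ {s(v,y)} := by
    rw [hM', Subgraph.edgeSet_sup, Subgraph.edgeSet_sup, hDedge,
      edgeSet_subgraphOfAdj, edgeSet_subgraphOfAdj, Set.union_assoc]
  refine ⟨M', hm', ?_⟩
  have hxE : s(u,x) ∉ M.edgeSet \ {s(u,v)} := fun h => hxM (M.edge_vert h.1.symm)
  have hyE : s(v,y) ∉ (M.edgeSet \ {s(u,v)}) ∪ {s(u,x)} := by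
    rintro (h | h)
    · exact hyM (M.edge_vert h.1.symm)
    · rw [Set.mem_singleton_iff, Sym2.eq_iff] at h
      rcases h with ⟨h1, _⟩ | ⟨h1, _⟩
      · exact hune h1.symm
      · exact hvx h1
  have huvE : s(u,v) ∈ M.edgeSet := huv
  rw [hedge, Set.ncard_union_eq (Set.disjoint_singleton_right.2 hyE) (Set.toFinite _)
      (Set.toFinite _),
    Set.ncard_union_eq (Set.disjoint_singleton_right.2 hxE) (Set.toFinite _) (Set.toFinite _),
    Set.ncard_singleton, Set.ncard_diff_singleton_of_mem huvE]
  have : 0 < M.edgeSet.ncard := (Set.ncard_pos (Set.toFinite _)).2 ⟨_, huvE⟩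
  simp only [Set.ncard_singleton]
  omega

/-- if `M` is a maximum matching covering the vertex set `M.verts`
and `(u, v)` is an edge of `M`, then, writing `d_out w` for the number of
neighbors of `w` outside `M.verts`, either `d_out u = d_out v = 1` or at least
one of `d_out u`, `d_out v` is zero. -/
theorem dout_dichotomy {V : Type*} [Fintype V] (G : SimpleGraph V)
    (M : G.Subgraph) (hM : M.IsMatching)
    (hmax : ∀ M' : G.Subgraph, M'.IsMatching → M'.edgeSet.ncard ≤ M.edgeSet.ncard)
    {u v : V} (huv : M.Adj u v) :
    ((G.neighborSet u \ M.verts).ncard = 1 ∧ (G.neighborSet v \ M.verts).ncard = 1) ∨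
    (G.neighborSet u \ M.verts).ncard = 0 ∨ (G.neighborSet v \ M.verts).ncard = 0 := by
  classical
  by_contra hcon
  push_neg at hcon
  obtain ⟨h1, hu0, hv0⟩ := hcon
  have hu1 : 1 ≤ (G.neighborSet u \ M.verts).ncard := Nat.one_le_iff_ne_zero.2 hu0
  have hv1 : 1 ≤ (G.neighborSet v \ M.verts).ncard := Nat.one_le_iff_ne_zero.2 hv0
  have key : ∀ (a b : V), M.Adj a b → 2 ≤ (G.neighborSet a \ M.verts).ncard →
      1 ≤ (G.neighborSet b \ M.verts).ncard → False := by
    intro a b hab h2 hb1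
    obtain ⟨y, hy⟩ := (Set.ncard_pos (Set.toFinite _)).1 hb1
    obtain ⟨x, hxmem, hxy⟩ := Set.exists_ne_of_one_lt_ncard h2 y
    obtain ⟨M', hm', hcard⟩ := aug_matching G M hM hab hxmem.1 hy.1 hxmem.2 hy.2 hxy
    have := hmax M' hm'
    omega
  rcases Nat.lt_or_ge (G.neighborSet u \ M.verts).ncard 2 with h | h
  · rcases Nat.lt_or_ge (G.neighborSet v \ M.verts).ncard 2 with h' | h'
    · exact h1 (by omega) (by omega)
    · exact key v u huv.symm h' hu1
  · exact key u v huv h hv1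
end

section
/- Let M be a maximum matching in a simple graph G covering vertex set S, with |M| = k and |V(G)| = n, and assume n - 2k ≥ 2. Then for every edge (u,v) ∈ M, the total number of edges from {u,v} to vertices outside S is at most n - 2k. -/
open SimpleGraph

lemma matching_two_mul_card {V : Type*} {G : SimpleGraph V} {M : G.Subgraph}
    (hM : M.IsMatching) : M.verts.ncard = 2 * M.edgeSet.ncard := by
  classical
  have hout : ∀ e : Sym2 V, s(e.out.1, e.out.2) = e := by
    intro e
    conv_rhs => rw [← e.out_eq]
  have hadj : ∀ e : Sym2 V, e ∈ M.edgeSet → M.Adj e.out.1 e.out.2 := by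
    intro e he
    rw [← SimpleGraph.Subgraph.mem_edgeSet, hout]
    exact he
  let f : M.edgeSet × Bool → M.verts := fun p =>
    if p.2 then ⟨(p.1 : Sym2 V).out.1, M.edge_vert (hadj _ p.1.2)⟩
    else ⟨(p.1 : Sym2 V).out.2, M.edge_vert (hadj _ p.1.2).symm⟩
  have key : ∀ (x y z : V), M.Adj x y → M.Adj x z → y = z := by
    intro x y z hxy hxz
    obtain ⟨w, -, hw⟩ := hM (M.edge_vert hxy)
    rw [hw y hxy, hw z hxz]
  have hne : ∀ e : Sym2 V, e ∈ M.edgeSet → e.out.1 ≠ e.out.2 := by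
    intro e he
    exact (hadj e he).ne
  have hedge_eq : ∀ (e e' : Sym2 V), e ∈ M.edgeSet → e' ∈ M.edgeSet →
      ∀ x, x ∈ e → x ∈ e' → e = e' := by
    intro e e' he he' x hx hx'
    obtain ⟨y, hy⟩ := hx
    obtain ⟨y', hy'⟩ := hx'
    subst hy hy'
    rw [SimpleGraph.Subgraph.mem_edgeSet] at he he'
    rw [key x y y' he he']
  have hbij : Function.Bijective f := by
    constructor
    · rintro ⟨⟨e, he⟩, b⟩ ⟨⟨e', he'⟩, b'⟩ hfe
      have hmem : ∀ (c : Bool) (d : Sym2 V) (hd : d ∈ M.edgeSet), (f (⟨d, hd⟩, c) : V) ∈ d := by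
        intro c d hd
        rcases c with _ | _
        · exact d.out_snd_mem
        · exact d.out_fst_mem
      have hee' : e = e' := by
        apply hedge_eq e e' he he' (f (⟨e, he⟩, b) : V) (hmem b e he)
        rw [hfe]; exact hmem b' e' he'
      subst hee'
      have hfe' := congrArg Subtype.val hfe
      have hbb' : b = b' := by
        rcases b with _|_ <;> rcases b' with _|_
        · rfl
        · simp only [f, if_pos, if_neg, Bool.false_eq_true, ite_true, ite_false] at hfe'
          exact absurd hfe'.symm (hne e he)
        · simp only [f, if_pos, if_neg, Bool.false_eq_true, ite_true, ite_false] at hfe'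
          exact absurd hfe' (hne e he)
        · rfl
      rw [hbb']
    · rintro ⟨x, hx⟩
      obtain ⟨y, hy, -⟩ := hM hx
      have he : s(x, y) ∈ M.edgeSet := SimpleGraph.Subgraph.mem_edgeSet.2 hy
      have hxmem : x ∈ s(x, y) := Sym2.mem_mk_left x y
      have hor : x = (s(x,y)).out.1 ∨ x = (s(x,y)).out.2 := by
        rw [← hout s(x,y), Sym2.mem_iff] at hxmem
        exact hxmem
      rcases hor with h | h
      · exact ⟨(⟨s(x,y), he⟩, true), by simp [f, Subtype.ext_iff, ← h]⟩
      · exact ⟨(⟨s(x,y), he⟩, false), by simp [f, Subtype.ext_iff, ← h]⟩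
  have hcard := Nat.card_eq_of_bijective f hbij
  rw [Nat.card_prod, Nat.card_coe_set_eq, Nat.card_coe_set_eq,
    Nat.card_eq_fintype_card, Fintype.card_bool] at hcard
  omega

lemma aug_eq {V : Type*} [Fintype V] {G : SimpleGraph V}
    {M : G.Subgraph} (hM : M.IsMatching)
    (hmax : ∀ M' : G.Subgraph, M'.IsMatching → M'.edgeSet.ncard ≤ M.edgeSet.ncard)
    {u v w w' : V} (huv : M.Adj u v)
    (hguw : G.Adj u w) (hw : w ∉ M.verts)
    (hgvw : G.Adj v w') (hw' : w' ∉ M.verts) : w = w' := by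
  classical
  by_contra hne
  have memE : ∀ {a b : V}, s(a,b) ∈ M.edgeSet ↔ M.Adj a b := fun {a b} =>
    SimpleGraph.Subgraph.mem_edgeSet
  have hu : u ∈ M.verts := M.edge_vert huv
  have hv : v ∈ M.verts := M.edge_vert huv.symm
  have key : ∀ (x y z : V), M.Adj x y → M.Adj x z → y = z := by
    intro x y z hxy hxz
    obtain ⟨t, -, ht⟩ := hM (M.edge_vert hxy)
    rw [ht y hxy, ht z hxz]
  have hwu : w ≠ u := fun h => hw (h ▸ hu)
  have hwv : w ≠ v := fun h => hw (h ▸ hv)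
  have hw'u : w' ≠ u := fun h => hw' (h ▸ hu)
  have hw'v : w' ≠ v := fun h => hw' (h ▸ hv)
  have hune : u ≠ v := huv.ne
  set M' : G.Subgraph :=
    (M.deleteEdges {s(u,v)}) ⊔ G.subgraphOfAdj hguw ⊔ G.subgraphOfAdj hgvw with hM'def
  have hadj' : ∀ x y : V, M'.Adj x y ↔
      (M.Adj x y ∧ ¬(s(x,y) = s(u,v))) ∨ s(u,w) = s(x,y) ∨ s(v,w') = s(x,y) := by
    intro x y
    simp [hM'def, Subgraph.sup_adj, Subgraph.deleteEdges_adj, subgraphOfAdj_adj, or_assoc]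
  have hverts' : M'.verts = M.verts ∪ {u, w} ∪ {v, w'} := by
    simp [hM'def]
  have hMw : ∀ y, ¬ M.Adj w y := fun y hy => hw (M.edge_vert hy)
  have hMw' : ∀ y, ¬ M.Adj w' y := fun y hy => hw' (M.edge_vert hy)
  have hM'match : M'.IsMatching := by
    intro x hx
    rw [hverts'] at hx
    by_cases hxu : u = x
    · subst hxu
      refine ⟨w, ?_, ?_⟩
      · show M'.Adj u w
        rw [hadj']; right; left; rfl
      · intro y hy
        simp only [hadj'] at hy
        rcases hy with ⟨hMy, hny⟩ | hy | hy
        · exact absurd (key u y v hMy huv) (fun h => hny (by rw [h]))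
        · rw [Sym2.eq_iff] at hy
          rcases hy with ⟨-, h⟩ | ⟨h1, h2⟩
          · exact h.symm
          · exact absurd h2 hwu
        · rw [Sym2.eq_iff] at hy
          rcases hy with ⟨h1, -⟩ | ⟨h1, h2⟩
          · exact absurd h1 hune.symm
          · exact absurd h2 hw'u
    · by_cases hxv : v = x
      · subst hxv
        refine ⟨w', ?_, ?_⟩
        · show M'.Adj v w'
          rw [hadj']; right; right; rfl
        · intro y hy
          simp only [hadj'] at hy
          rcases hy with ⟨hMy, hny⟩ | hy | hy
          · exact absurd (key v y u hMy huv.symm)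
              (fun h => hny (by rw [h, Sym2.eq_swap]))
          · rw [Sym2.eq_iff] at hy
            rcases hy with ⟨h1, -⟩ | ⟨h1, h2⟩
            · exact absurd h1 hune
            · exact absurd h2 hwv
          · rw [Sym2.eq_iff] at hy
            rcases hy with ⟨-, h⟩ | ⟨h1, h2⟩
            · exact h.symm
            · exact absurd h2 hw'v
      · by_cases hxw : w = x
        · subst hxw
          refine ⟨u, ?_, ?_⟩
          · show M'.Adj w u
            rw [hadj']; right; left; exact Sym2.eq_swap
          · intro y hy
            simp only [hadj'] at hy
            rcases hy with ⟨hMy, -⟩ | hy | hy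
            · exact absurd hMy (hMw y)
            · rw [Sym2.eq_iff] at hy
              rcases hy with ⟨h1, -⟩ | ⟨h1, -⟩
              · exact absurd h1 hwu.symm
              · exact h1.symm
            · rw [Sym2.eq_iff] at hy
              rcases hy with ⟨h1, -⟩ | ⟨-, h2⟩
              · exact absurd h1 hwv.symm
              · exact absurd h2.symm hne
        · by_cases hxw' : w' = x
          · subst hxw'
            refine ⟨v, ?_, ?_⟩
            · show M'.Adj w' v
              rw [hadj']; right; right; exact Sym2.eq_swap
            · intro y hy
              simp only [hadj'] at hy
              rcases hy with ⟨hMy, -⟩ | hy | hy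
              · exact absurd hMy (hMw' y)
              · rw [Sym2.eq_iff] at hy
                rcases hy with ⟨h1, -⟩ | ⟨-, h2⟩
                · exact absurd h1 hw'u.symm
                · exact absurd h2 hne
              · rw [Sym2.eq_iff] at hy
                rcases hy with ⟨h1, -⟩ | ⟨h1, -⟩
                · exact absurd h1 hw'v.symm
                · exact h1.symm
          · have hxM : x ∈ M.verts := by
              rcases hx with (hx | hx) | hx
              · exact hx
              · rcases hx with hx | hx
                · exact absurd hx.symm hxu
                · exact absurd hx.symm hxw
              · rcases hx with hx | hx
                · exact absurd hx.symm hxv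
                · exact absurd hx.symm hxw'
            obtain ⟨y, hy, hyu⟩ := hM hxM
            have hyne_u : y ≠ u := by
              intro h
              exact hxv (key u x v (h ▸ hy.symm) huv).symm
            have hyne_v : y ≠ v := by
              intro h
              exact hxu (key v x u (h ▸ hy.symm) huv.symm).symm
            refine ⟨y, ?_, ?_⟩
            · show M'.Adj x y
              rw [hadj']; left
              refine ⟨hy, ?_⟩
              rw [Sym2.eq_iff]
              push_neg
              exact ⟨fun h => absurd h.symm hxu, fun h => absurd h.symm hxv⟩
            · intro z hz
              simp only [hadj'] at hz
              rcases hz with ⟨hMz, -⟩ | hz | hz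
              · exact hyu z hMz
              · rw [Sym2.eq_iff] at hz
                rcases hz with ⟨h1, -⟩ | ⟨h1, h2⟩
                · exact absurd h1 hxu
                · exact absurd h2 hxw
              · rw [Sym2.eq_iff] at hz
                rcases hz with ⟨h1, -⟩ | ⟨h1, h2⟩
                · exact absurd h1 hxv
                · exact absurd h2 hxw'
  have hdel : (M.deleteEdges {s(u,v)}).edgeSet = M.edgeSet \ {s(u,v)} := by
    ext e
    refine Sym2.ind (fun a b => ?_) e
    simp [SimpleGraph.Subgraph.mem_edgeSet, SimpleGraph.Subgraph.deleteEdges_adj]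
  have heM' : M'.edgeSet = (M.edgeSet \ {s(u,v)}) ∪ {s(u,w)} ∪ {s(v,w')} := by
    rw [hM'def, Subgraph.edgeSet_sup, Subgraph.edgeSet_sup, hdel,
      SimpleGraph.edgeSet_subgraphOfAdj, SimpleGraph.edgeSet_subgraphOfAdj]
  have hfin : M.edgeSet.Finite := Set.toFinite _
  have huvmem : s(u,v) ∈ M.edgeSet := memE.2 huv
  have huwnot : s(u,w) ∉ M.edgeSet := fun h => hw (M.edge_vert (memE.1 h).symm)
  have hvwnot : s(v,w') ∉ M.edgeSet := fun h => hw' (M.edge_vert (memE.1 h).symm)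
  have hedne : s(u,w) ≠ s(v,w') := by
    intro h
    rw [Sym2.eq_iff] at h
    rcases h with ⟨h1, -⟩ | ⟨h1, -⟩
    · exact hune h1
    · exact hw'u h1.symm
  have hpos : 0 < M.edgeSet.ncard := (Set.ncard_pos hfin).2 ⟨_, huvmem⟩
  have hcount : M'.edgeSet.ncard = M.edgeSet.ncard + 1 := by
    rw [heM', Set.union_singleton, Set.union_singleton]
    rw [Set.ncard_insert_of_notMem, Set.ncard_insert_of_notMem,
      Set.ncard_diff_singleton_of_mem huvmem]
    · omega
    · intro h
      exact huwnot h.1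
    · intro h
      rcases h with h | h
      · exact hedne h.symm
      · exact hvwnot h.1
  have := hmax M' hM'match
  omega


/-- if `M` is a maximum matching of size `k` in a graph on `n`
vertices with `n - 2k ≥ 2`, then for every edge `(u, v) ∈ M` the number of
edges from `{u, v}` to vertices outside the covered set is at most `n - 2k`. -/
theorem dout_sum_le {V : Type*} [Fintype V] (G : SimpleGraph V)
    (M : G.Subgraph) (hM : M.IsMatching)
    (hmax : ∀ M' : G.Subgraph, M'.IsMatching → M'.edgeSet.ncard ≤ M.edgeSet.ncard)
    (hn : 2 * M.edgeSet.ncard + 2 ≤ Fintype.card V)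
    {u v : V} (huv : M.Adj u v) :
    (G.neighborSet u \ M.verts).ncard + (G.neighborSet v \ M.verts).ncard ≤
      Fintype.card V - 2 * M.edgeSet.ncard := by
  classical
  set A := G.neighborSet u \ M.verts with hA
  set B := G.neighborSet v \ M.verts with hB
  have hvcard : M.verts.ncard = 2 * M.edgeSet.ncard := matching_two_mul_card hM
  have hcompl : M.verts.ncard + (M.vertsᶜ).ncard = Fintype.card V := by
    rw [← Nat.card_eq_fintype_card]
    exact Set.ncard_add_ncard_compl M.verts
  have hAc : A ⊆ M.vertsᶜ := fun x hx => hx.2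
  have hBc : B ⊆ M.vertsᶜ := fun x hx => hx.2
  have hAle : A.ncard ≤ (M.vertsᶜ).ncard := Set.ncard_le_ncard hAc (Set.toFinite _)
  have hBle : B.ncard ≤ (M.vertsᶜ).ncard := Set.ncard_le_ncard hBc (Set.toFinite _)
  rcases Set.eq_empty_or_nonempty A with hAe | ⟨w, hwA⟩
  · rw [hAe, Set.ncard_empty]
    omega
  · rcases Set.eq_empty_or_nonempty B with hBe | ⟨w', hw'B⟩
    · rw [hBe, Set.ncard_empty]
      omega
    · have hAsub : A ⊆ {w'} := by
        intro a ha
        have := aug_eq hM hmax huv ha.1 ha.2 hw'B.1 hw'B.2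
        simp [this]
      have hBsub : B ⊆ {w} := by
        intro b hb
        have := aug_eq hM hmax huv hwA.1 hwA.2 hb.1 hb.2
        simp [← this]
      have h1 : A.ncard ≤ 1 := by
        simpa using Set.ncard_le_ncard hAsub (Set.finite_singleton w')
      have h2 : B.ncard ≤ 1 := by
        simpa using Set.ncard_le_ncard hBsub (Set.finite_singleton w)
      omega
end

section
/- Let G be a simple graph with maximum degree d ≥ 2 and maximum matching M covering vertex set S. For each edge (u,v) ∈ M, define s(u,v) = (d_in(u) + d_in(v))/2 + d_out(u) + d_out(v). Then s(u,v) ≤ 3d/2, equivalently d_in(u) + d_in(v) + 2d_out(u) + 2d_out(v) ≤ 3d. -/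
/-- let `G` have maximum degree `d ≥ 2` and let `M` be a maximum
matching. For each edge `(u, v) ∈ M`,
`d_in u + d_in v + 2 d_out u + 2 d_out v ≤ 3d`, i.e. `s(u,v) ≤ 3d/2`. -/
theorem s_le_three_halves_d {V : Type*} [Fintype V] (G : SimpleGraph V)
    [DecidableRel G.Adj] (M : G.Subgraph) (hM : M.IsMatching)
    (hmax : ∀ M' : G.Subgraph, M'.IsMatching → M'.edgeSet.ncard ≤ M.edgeSet.ncard)
    (hd : 2 ≤ G.maxDegree) {u v : V} (huv : M.Adj u v) :
    (G.neighborSet u ∩ M.verts).ncard + (G.neighborSet v ∩ M.verts).ncard +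
      2 * (G.neighborSet u \ M.verts).ncard + 2 * (G.neighborSet v \ M.verts).ncard ≤
      3 * G.maxDegree := by
  classical
  have hu : u ∈ M.verts := M.edge_vert huv
  have hv : v ∈ M.verts := M.edge_vert huv.symm
  have hune : u ≠ v := (M.adj_sub huv).ne
  -- key: outside neighbors of u and v coincide
  have key : ∀ x ∈ G.neighborSet u \ M.verts, ∀ y ∈ G.neighborSet v \ M.verts, x = y := by
    intro x hx y hy
    by_contra hxy
    have hxM : x ∉ M.verts := hx.2
    have hyM : y ∉ M.verts := hy.2
    have hGux : G.Adj u x := hx.1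
    have hGvy : G.Adj v y := hy.1
    have hxu : x ≠ u := fun h => hxM (h ▸ hu)
    have hxv : x ≠ v := fun h => hxM (h ▸ hv)
    have hyu : y ≠ u := fun h => hyM (h ▸ hu)
    have hyv : y ≠ v := fun h => hyM (h ▸ hv)
    set M' : G.Subgraph :=
      { verts := insert x (insert y M.verts)
        Adj := fun a b => (M.Adj a b ∧ s(a,b) ≠ s(u,v)) ∨ s(a,b) = s(u,x) ∨ s(a,b) = s(v,y)
        adj_sub := by
          rintro a b (⟨h, -⟩ | h | h)
          · exact M.adj_sub h
          · rcases Sym2.eq_iff.1 h with ⟨rfl, rfl⟩ | ⟨rfl, rfl⟩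
            · exact hGux
            · exact hGux.symm
          · rcases Sym2.eq_iff.1 h with ⟨rfl, rfl⟩ | ⟨rfl, rfl⟩
            · exact hGvy
            · exact hGvy.symm
        edge_vert := by
          rintro a b (⟨h, -⟩ | h | h)
          · exact Set.mem_insert_of_mem _ (Set.mem_insert_of_mem _ (M.edge_vert h))
          · rcases Sym2.eq_iff.1 h with ⟨rfl, rfl⟩ | ⟨rfl, rfl⟩
            · exact Set.mem_insert_of_mem _ (Set.mem_insert_of_mem _ hu)
            · exact Set.mem_insert _ _
          · rcases Sym2.eq_iff.1 h with ⟨rfl, rfl⟩ | ⟨rfl, rfl⟩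
            · exact Set.mem_insert_of_mem _ (Set.mem_insert_of_mem _ hv)
            · exact Set.mem_insert_of_mem _ (Set.mem_insert _ _)
        symm := by
          constructor
          rintro a b (⟨h, hne⟩ | h | h)
          · exact Or.inl ⟨h.symm, by rwa [Sym2.eq_swap]⟩
          · exact Or.inr (Or.inl (by rwa [Sym2.eq_swap]))
          · exact Or.inr (Or.inr (by rwa [Sym2.eq_swap])) }
    have hM' : M'.IsMatching := by
      intro w hw
      rcases hw with rfl | rfl | hw
      · -- w = x : partner u
        refine ⟨u, Or.inr (Or.inl (Sym2.eq_swap)), ?_⟩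
        rintro z (⟨h, -⟩ | h | h)
        · exact absurd (M.edge_vert h) hxM
        · rcases Sym2.eq_iff.1 h with ⟨h1, rfl⟩ | ⟨-, rfl⟩
          · exact absurd h1 hxu
          · rfl
        · rcases Sym2.eq_iff.1 h with ⟨h1, -⟩ | ⟨h1, -⟩
          · exact absurd h1 hxv
          · exact absurd h1 hxy
      · -- w = y : partner v
        refine ⟨v, Or.inr (Or.inr (Sym2.eq_swap)), ?_⟩
        rintro z (⟨h, -⟩ | h | h)
        · exact absurd (M.edge_vert h) hyM
        · rcases Sym2.eq_iff.1 h with ⟨h1, -⟩ | ⟨h1, -⟩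
          · exact absurd h1 hyu
          · exact absurd h1.symm hxy
        · rcases Sym2.eq_iff.1 h with ⟨h1, rfl⟩ | ⟨-, rfl⟩
          · exact absurd h1 hyv
          · rfl
      · by_cases hwu : w = u
        · subst hwu
          refine ⟨x, Or.inr (Or.inl rfl), ?_⟩
          rintro z (⟨h, hne⟩ | h | h)
          · have : z = v := (hM hu).unique h huv
            exact absurd (by rw [this]) hne
          · rcases Sym2.eq_iff.1 h with ⟨-, rfl⟩ | ⟨h1, -⟩
            · rfl
            · exact absurd h1.symm hxu
          · rcases Sym2.eq_iff.1 h with ⟨h1, -⟩ | ⟨h1, -⟩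
            · exact absurd h1 hune
            · exact absurd h1.symm hyu
        · by_cases hwv : w = v
          · subst hwv
            refine ⟨y, Or.inr (Or.inr rfl), ?_⟩
            rintro z (⟨h, hne⟩ | h | h)
            · have : z = u := (hM hv).unique h huv.symm
              exact absurd (by rw [this, Sym2.eq_swap]) hne
            · rcases Sym2.eq_iff.1 h with ⟨h1, -⟩ | ⟨h1, -⟩
              · exact absurd h1.symm hune
              · exact absurd h1.symm hxv
            · rcases Sym2.eq_iff.1 h with ⟨-, rfl⟩ | ⟨h1, -⟩
              · rfl
              · exact absurd h1.symm hyv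
          · obtain ⟨z, hz, hzu⟩ := hM hw
            have hne : s(w,z) ≠ s(u,v) := by
              intro h
              rcases Sym2.eq_iff.1 h with ⟨h1, -⟩ | ⟨h1, -⟩
              · exact hwu h1
              · exact hwv h1
            refine ⟨z, Or.inl ⟨hz, hne⟩, ?_⟩
            rintro z' (⟨h, -⟩ | h | h)
            · exact hzu _ h
            · rcases Sym2.eq_iff.1 h with ⟨h1, -⟩ | ⟨h1, -⟩
              · exact absurd h1 hwu
              · exact absurd (h1 ▸ hw) hxM
            · rcases Sym2.eq_iff.1 h with ⟨h1, -⟩ | ⟨h1, -⟩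
              · exact absurd h1 hwv
              · exact absurd (h1 ▸ hw) hyM
    have hedge : M'.edgeSet = insert s(u,x) (insert s(v,y) (M.edgeSet \ {s(u,v)})) := by
      ext e
      induction e using Sym2.ind with
      | _ a b =>
        simp only [SimpleGraph.Subgraph.mem_edgeSet, Set.mem_insert_iff, Set.mem_diff,
          Set.mem_singleton_iff]
        constructor
        · rintro (⟨h, hne⟩ | h | h)
          · exact Or.inr (Or.inr ⟨h, hne⟩)
          · exact Or.inl h
          · exact Or.inr (Or.inl h)
        · rintro (h | h | ⟨h, hne⟩)
          · exact Or.inr (Or.inl h)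
          · exact Or.inr (Or.inr h)
          · exact Or.inl ⟨h, hne⟩
    have hux_ne : s(u,x) ≠ s(v,y) := by
      intro h
      rcases Sym2.eq_iff.1 h with ⟨h1, -⟩ | ⟨h1, -⟩
      · exact hune h1
      · exact hyu h1.symm
    have hux_nmem : s(u,x) ∉ M.edgeSet := fun h =>
      hxM (M.edge_vert (SimpleGraph.Subgraph.mem_edgeSet.1 h).symm)
    have hvy_nmem : s(v,y) ∉ M.edgeSet := fun h =>
      hyM (M.edge_vert (SimpleGraph.Subgraph.mem_edgeSet.1 h).symm)
    have huv_mem : s(u,v) ∈ M.edgeSet := huv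
    have hcard : M'.edgeSet.ncard = M.edgeSet.ncard + 1 := by
      rw [hedge, Set.ncard_insert_of_notMem (by
          simp only [Set.mem_insert_iff, Set.mem_diff, Set.mem_singleton_iff]
          push_neg
          exact ⟨hux_ne, fun h => absurd h hux_nmem⟩) (Set.toFinite _),
        Set.ncard_insert_of_notMem (by
          simp only [Set.mem_diff, Set.mem_singleton_iff]
          exact fun h => hvy_nmem h.1) (Set.toFinite _)]
      have := Set.ncard_diff_singleton_add_one huv_mem (Set.toFinite _)
      omega
    have := hmax M' hM'
    omega
  -- degree counting
  have degsum : ∀ w : V, (G.neighborSet w ∩ M.verts).ncard +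
      (G.neighborSet w \ M.verts).ncard = G.degree w := by
    intro w
    rw [Set.ncard_inter_add_ncard_diff_eq_ncard (G.neighborSet w) M.verts (Set.toFinite _)]
    rw [Set.ncard_eq_toFinset_card', Set.toFinset_card]
    exact G.card_neighborSet_eq_degree w
  have hdu : G.degree u ≤ G.maxDegree := G.degree_le_maxDegree u
  have hdv : G.degree v ≤ G.maxDegree := G.degree_le_maxDegree v
  have hsu := degsum u
  have hsv := degsum v
  rcases (G.neighborSet u \ M.verts).eq_empty_or_nonempty with h0 | ⟨x, hx⟩
  · rw [h0, Set.ncard_empty]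
    omega
  rcases (G.neighborSet v \ M.verts).eq_empty_or_nonempty with h0 | ⟨y, hy⟩
  · rw [h0, Set.ncard_empty]
    omega
  have hxy : x = y := key x hx y hy
  have h1 : (G.neighborSet u \ M.verts).ncard = 1 := by
    rw [Set.eq_singleton_iff_unique_mem.2 ⟨hx, fun z hz => (key z hz y hy).trans hxy.symm⟩]
    exact Set.ncard_singleton x
  have h2 : (G.neighborSet v \ M.verts).ncard = 1 := by
    rw [Set.eq_singleton_iff_unique_mem.2 ⟨hy, fun z hz => (key x hx z hz).symm.trans hxy⟩]
    exact Set.ncard_singleton y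
  omega
end
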